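/- Let Π be a finite nonempty set, let 𝒪 be a measurable space, and let r : 𝒪 → ℝ be a bounded measurable reward function. Call a map from Π to probability measures on 𝒪 a model, with f^M(π) := ∫ r dM(π) and π_M a maximizer of f^M over Π. Let 𝔐 be a nonempty set of models, let M̄ be any model, fix γ > 0, and set ℓ_M(π) := f^M(π_M) − f^M(π) − γ·D_H²(M(π), M̄(π)). Then inf_{p} sup_{M ∈ 𝔐} ∑_{π ∈ Π} p(π)·ℓ_M(π) = sup_{μ} inf_{p} ∑_{π ∈ Π} p(π)·E_{M∼μ}[ℓ_M(π)], where p ranges over all probability distributions on the finite set Π and μ ranges over all finitely supported probability distributions on 𝔐. -/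

import Mathlib

/-!
With finitely many decisions and bounded losses (`|f^M| ≤ sup |r|` and `0 ≤ D_H² ≤ 2`) this is a
finite-dimensional minimax theorem. The Bayes loss vectors `x ↦ E_{M∼μ} ℓ_M(x)` of finitely
supported priors form a convex set, and if `c` is the dual (Bayesian) value, each of them has a
coordinate `≤ c`: the set misses the open orthant `{v | ∀ x, c < v x}`. A hyperplane separating it
from the closed orthant has a nonnegative normal vector, and normalising it gives a distribution `p`
with `∑ x, p x * ℓ_M(x) ≤ c` for every `M`. The other inequality is weak duality.
-/

open MeasureTheory

noncomputable def sqHellinger {α : Type*} [MeasurableSpace α] (P Q : Measure α) : ℝ :=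
  ∫ x, (Real.sqrt ((P.rnDeriv (P + Q)) x).toReal
      - Real.sqrt ((Q.rnDeriv (P + Q)) x).toReal) ^ 2 ∂(P + Q)

structure FinDist (X : Type*) where
  support : Finset X
  w : X → ℝ
  nonneg : ∀ x, 0 ≤ w x
  zero_of_not_mem : ∀ x ∉ support, w x = 0
  sum_eq_one : ∑ x ∈ support, w x = 1

noncomputable def meanReward {X O : Type*} [MeasurableSpace O]
    (r : O → ℝ) (M : X → Measure O) (x : X) : ℝ :=
  ∫ o, r o ∂(M x)

open Set

namespace FinDist

variable {Z : Type*}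

lemma sum_mul_of_support_subset (μ : FinDist Z) {s : Finset Z} (hs : μ.support ⊆ s)
    (g : Z → ℝ) : ∑ z ∈ s, μ.w z * g z = ∑ z ∈ μ.support, μ.w z * g z :=
  (Finset.sum_subset hs fun z _ hz => by rw [μ.zero_of_not_mem z hz, zero_mul]).symm

lemma sum_eq_one_of_support_subset (μ : FinDist Z) {s : Finset Z} (hs : μ.support ⊆ s) :
    ∑ z ∈ s, μ.w z = 1 := by
  simpa [μ.sum_eq_one] using μ.sum_mul_of_support_subset hs 1

def dirac [DecidableEq Z] (z : Z) : FinDist Z where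
  support := {z}
  w := Pi.single z 1
  nonneg z' := by rw [Pi.single_apply]; positivity
  zero_of_not_mem z' hz' := Pi.single_eq_of_ne (Finset.notMem_singleton.1 hz') 1
  sum_eq_one := by simp

instance [Nonempty Z] : Nonempty (FinDist Z) := by
  classical exact ⟨dirac (Classical.arbitrary Z)⟩

def mix [DecidableEq Z] (μ ν : FinDist Z) {a b : ℝ} (ha : 0 ≤ a) (hb : 0 ≤ b)
    (hab : a + b = 1) : FinDist Z where
  support := μ.support ∪ ν.support
  w z := a * μ.w z + b * ν.w z
  nonneg z := by have := μ.nonneg z; have := ν.nonneg z; positivity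
  zero_of_not_mem z hz := by
    rw [Finset.mem_union, not_or] at hz
    rw [μ.zero_of_not_mem z hz.1, ν.zero_of_not_mem z hz.2]
    ring
  sum_eq_one := by
    rw [Finset.sum_add_distrib, ← Finset.mul_sum, ← Finset.mul_sum,
      μ.sum_eq_one_of_support_subset Finset.subset_union_left,
      ν.sum_eq_one_of_support_subset Finset.subset_union_right, mul_one, mul_one, hab]

lemma sum_mul_mem (μ : FinDist Z) {s : Set ℝ} (hs : Convex ℝ s) {g : Z → ℝ}
    (hg : ∀ z, g z ∈ s) : ∑ z ∈ μ.support, μ.w z * g z ∈ s :=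
  hs.sum_mem (fun z _ => μ.nonneg z) μ.sum_eq_one fun z _ => hg z

variable {X : Type*}

def mean (μ : FinDist Z) (L : Z → X → ℝ) : X → ℝ :=
  fun x => ∑ z ∈ μ.support, μ.w z * L z x

lemma mean_dirac [DecidableEq Z] (L : Z → X → ℝ) (z : Z) : (dirac z).mean L = L z := by
  ext x
  simp [mean, dirac]

lemma mean_mix [DecidableEq Z] (L : Z → X → ℝ) (μ ν : FinDist Z) {a b : ℝ} (ha : 0 ≤ a)
    (hb : 0 ≤ b) (hab : a + b = 1) :
    (μ.mix ν ha hb hab).mean L = a • μ.mean L + b • ν.mean L := by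
  ext x
  simp only [mean, mix, Pi.add_apply, Pi.smul_apply, smul_eq_mul, add_mul, mul_assoc,
    Finset.sum_add_distrib, ← Finset.mul_sum,
    μ.sum_mul_of_support_subset Finset.subset_union_left,
    ν.sum_mul_of_support_subset Finset.subset_union_right]

lemma convex_range_mean (L : Z → X → ℝ) : Convex ℝ (range fun μ : FinDist Z => μ.mean L) := by
  classical
  rintro _ ⟨μ, rfl⟩ _ ⟨ν, rfl⟩ a b ha hb hab
  exact ⟨μ.mix ν ha hb hab, mean_mix L μ ν ha hb hab⟩

lemma dotProduct_mean [Fintype X] (p : X → ℝ) (μ : FinDist Z) (L : Z → X → ℝ) :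
    p ⬝ᵥ μ.mean L = ∑ z ∈ μ.support, μ.w z * (p ⬝ᵥ L z) := by
  simp only [dotProduct, mean, Finset.mul_sum]
  rw [Finset.sum_comm]
  exact Finset.sum_congr rfl fun _ _ => Finset.sum_congr rfl fun _ _ => by ring

end FinDist

lemma dotProduct_mem_of_mem_stdSimplex {X : Type*} [Fintype X] {s : Set ℝ} (hs : Convex ℝ s)
    {p v : X → ℝ} (hp : p ∈ stdSimplex ℝ X) (hv : ∀ x, v x ∈ s) : p ⬝ᵥ v ∈ s :=
  hs.sum_mem (fun x _ => hp.1 x) hp.2 fun x _ => hv x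

lemma nonneg_of_forall_le_add_mul {m k a : ℝ} (h : ∀ t : ℝ, 0 ≤ t → m ≤ k + t * a) :
    0 ≤ a := by
  by_contra! ha
  have h₀ := h 0 le_rfl
  have h₁ := h ((k - m + 1) / -a) (div_nonneg (by linarith) (by linarith))
  rw [div_mul_eq_mul_div, div_neg, mul_div_cancel_right₀ _ ha.ne] at h₁
  linarith

theorem exists_mem_stdSimplex_forall_dotProduct_le {X : Type*} [Fintype X]
    {B : Set (X → ℝ)} (hB : Convex ℝ B) (hB₀ : B.Nonempty) {c : ℝ}
    (hc : ∀ v ∈ B, ∃ x, v x ≤ c) : ∃ p ∈ stdSimplex ℝ X, ∀ v ∈ B, p ⬝ᵥ v ≤ c := by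
  classical
  set orthant : Set (X → ℝ) := univ.pi fun _ => Ici c
  have h_interior : interior orthant = univ.pi fun _ => Ioi c := by
    simp only [orthant, interior_pi_set finite_univ, interior_Ici]
  have h_disj : Disjoint (interior orthant) B := by
    rw [h_interior, disjoint_right]
    intro v hv hv'
    obtain ⟨x, hx⟩ := hc v hv
    exact hx.not_gt (hv' x (mem_univ x))
  obtain ⟨f, u, hf, h_orthant, hB_ge⟩ := geometric_hahn_banach_of_nonempty_interior
    (convex_pi fun _ _ => convex_Ici c) hB h_disj
    ⟨fun _ => c + 1, by rw [h_interior]; exact fun _ _ => lt_add_one c⟩ hB₀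
  set q := (dotProductEquiv ℝ X).symm (-f).toLinearMap
  have hq : ∀ w, q ⬝ᵥ w = -f w := fun w =>
    LinearMap.congr_fun ((dotProductEquiv ℝ X).apply_symm_apply (-f).toLinearMap) w
  have hq_nonneg : ∀ x, 0 ≤ q x := fun x => nonneg_of_forall_le_add_mul fun t ht => by
    have hmem : (fun _ => c) + t • (Pi.single x 1 : X → ℝ) ∈ orthant := fun y _ => by
      rw [Pi.add_apply, Pi.smul_apply, Pi.single_apply]
      split_ifs <;> simp [ht]
    have := neg_le_neg (h_orthant _ hmem)
    rwa [← hq, dotProduct_add, dotProduct_smul, dotProduct_single_one, smul_eq_mul] at this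
  have hq_ne : q ≠ 0 := fun h₀ => hf <| ContinuousLinearMap.ext fun w => by
    simpa [h₀] using hq w
  set S := ∑ x, q x
  have hS : 0 < S := by
    obtain ⟨x, hx⟩ := Function.ne_iff.1 hq_ne
    exact Finset.sum_pos' (fun x _ => hq_nonneg x)
      ⟨x, Finset.mem_univ x, (hq_nonneg x).lt_of_ne' hx⟩
  have hcS : -u ≤ c * S := by
    have := neg_le_neg (h_orthant (fun _ => c) fun _ _ => self_mem_Ici)
    rwa [← hq, dotProduct_comm, dotProduct, ← Finset.mul_sum] at this
  refine ⟨S⁻¹ • q, ⟨fun x => mul_nonneg (inv_nonneg.2 hS.le) (hq_nonneg x), ?_⟩, fun v hv => ?_⟩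
  · simp only [Pi.smul_apply, smul_eq_mul, ← Finset.mul_sum]
    exact inv_mul_cancel₀ hS.ne'
  · calc S⁻¹ • q ⬝ᵥ v = S⁻¹ * -f v := by rw [smul_dotProduct, hq, smul_eq_mul]
      _ ≤ S⁻¹ * (c * S) := by gcongr; linarith [hB_ge v hv]
      _ = c := by field_simp

lemma exists_mem_stdSimplex_forall_dotProduct_row_le {X Z : Type*} [Fintype X] [Nonempty Z]
    (L : Z → X → ℝ) {c : ℝ} (hc : ∀ μ : FinDist Z, ∃ x, μ.mean L x ≤ c) :
    ∃ p ∈ stdSimplex ℝ X, ∀ z, p ⬝ᵥ L z ≤ c := by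
  classical
  obtain ⟨p, hp, hpc⟩ := exists_mem_stdSimplex_forall_dotProduct_le
    (FinDist.convex_range_mean L) (range_nonempty _) (forall_mem_range.2 hc)
  exact ⟨p, hp, fun z => FinDist.mean_dirac L z ▸ hpc _ ⟨FinDist.dirac z, rfl⟩⟩

theorem iInf_iSup_dotProduct_eq_iSup_iInf_dotProduct_mean {X Z : Type*} [Fintype X]
    [Nonempty X] [Nonempty Z] (L : Z → X → ℝ) (hL : ∃ C, ∀ z x, |L z x| ≤ C) :
    ⨅ p : stdSimplex ℝ X, ⨆ z, p.1 ⬝ᵥ L z =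
      ⨆ μ : FinDist Z, ⨅ p : stdSimplex ℝ X, p.1 ⬝ᵥ μ.mean L := by
  classical
  obtain ⟨C, hC⟩ := hL
  obtain ⟨z₀⟩ := ‹Nonempty Z›
  obtain ⟨x₀⟩ := ‹Nonempty X›
  let p₀ : stdSimplex ℝ X := ⟨_, single_mem_stdSimplex ℝ x₀⟩
  have hLC : ∀ z x, L z x ∈ Icc (-C) C := fun z x => abs_le.1 (hC z x)
  have h_row : ∀ (p : stdSimplex ℝ X) z, p.1 ⬝ᵥ L z ∈ Icc (-C) C := fun p z =>
    dotProduct_mem_of_mem_stdSimplex (convex_Icc _ _) p.2 (hLC z)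
  have h_mean : ∀ (p : stdSimplex ℝ X) (μ : FinDist Z), p.1 ⬝ᵥ μ.mean L ∈ Icc (-C) C :=
    fun p μ => dotProduct_mem_of_mem_stdSimplex (convex_Icc _ _) p.2 fun x =>
      μ.sum_mul_mem (convex_Icc _ _) fun z => hLC z x
  have hbdd_row : ∀ p : stdSimplex ℝ X, BddAbove (range fun z => p.1 ⬝ᵥ L z) := fun p =>
    ⟨C, forall_mem_range.2 fun z => (h_row p z).2⟩
  have hbdd_mean :
      ∀ μ : FinDist Z, BddBelow (range fun p : stdSimplex ℝ X => p.1 ⬝ᵥ μ.mean L) := fun μ =>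
    ⟨-C, forall_mem_range.2 fun p => (h_mean p μ).1⟩
  have hbdd_bayes :
      BddAbove (range fun μ : FinDist Z => ⨅ p : stdSimplex ℝ X, p.1 ⬝ᵥ μ.mean L) :=
    ⟨C, forall_mem_range.2 fun μ => (ciInf_le (hbdd_mean μ) p₀).trans (h_mean p₀ μ).2⟩
  apply le_antisymm
  · set c := ⨆ μ : FinDist Z, ⨅ p : stdSimplex ℝ X, p.1 ⬝ᵥ μ.mean L
    have hc : ∀ μ : FinDist Z, ∃ x, μ.mean L x ≤ c := fun μ => by
      obtain ⟨x, hx⟩ := Finite.exists_min (μ.mean L)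
      refine ⟨x, (le_ciInf fun p => ?_).trans (le_ciSup hbdd_bayes μ)⟩
      exact dotProduct_mem_of_mem_stdSimplex (convex_Ici _) p.2 fun y => mem_Ici.2 (hx y)
    obtain ⟨p, hp, hpc⟩ := exists_mem_stdSimplex_forall_dotProduct_row_le L hc
    have hbdd : BddBelow (range fun p : stdSimplex ℝ X => ⨆ z, p.1 ⬝ᵥ L z) :=
      ⟨-C, forall_mem_range.2 fun p => (h_row p z₀).1.trans (le_ciSup (hbdd_row p) z₀)⟩
    exact (ciInf_le hbdd ⟨p, hp⟩).trans (ciSup_le hpc)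
  · refine ciSup_le fun μ => ciInf_mono (hbdd_mean μ) fun p => ?_
    rw [FinDist.dotProduct_mean]
    exact μ.sum_mul_mem (convex_Iic _) fun z => mem_Iic.2 (le_ciSup (hbdd_row p) z)

lemma sqHellinger_nonneg {α : Type*} [MeasurableSpace α] (P Q : Measure α) :
    0 ≤ sqHellinger P Q :=
  integral_nonneg fun _ => sq_nonneg _

lemma sqHellinger_le_add {α : Type*} [MeasurableSpace α] (P Q : Measure α)
    [IsFiniteMeasure P] [IsFiniteMeasure Q] :
    sqHellinger P Q ≤ P.real univ + Q.real univ := by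
  have hP := Measure.integrable_toReal_rnDeriv (μ := P) (ν := P + Q)
  have hQ := Measure.integrable_toReal_rnDeriv (μ := Q) (ν := P + Q)
  rw [← Measure.integral_toReal_rnDeriv (Measure.AbsolutelyContinuous.rfl.add_right Q),
    ← Measure.integral_toReal_rnDeriv (Measure.AbsolutelyContinuous.rfl.add_right' P),
    ← integral_add hP hQ]
  refine integral_mono_of_nonneg (.of_forall fun _ => sq_nonneg _) (hP.add hQ)
    (.of_forall fun x => ?_)
  have ha := Real.sq_sqrt (P.rnDeriv (P + Q) x).toReal_nonneg
  have hb := Real.sq_sqrt (Q.rnDeriv (P + Q) x).toReal_nonneg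
  nlinarith [mul_nonneg (Real.sqrt_nonneg (P.rnDeriv (P + Q) x).toReal)
    (Real.sqrt_nonneg (Q.rnDeriv (P + Q) x).toReal)]

lemma abs_meanReward_le {X O : Type*} [MeasurableSpace O] {r : O → ℝ} {C : ℝ}
    (hr : ∀ o, |r o| ≤ C) (M : X → Measure O) (x : X) [IsProbabilityMeasure (M x)] :
    |meanReward r M x| ≤ C := by
  simpa [meanReward] using norm_integral_le_of_norm_le_const (μ := M x)
    (.of_forall fun o => (Real.norm_eq_abs _).trans_le (hr o))

theorem dec_minimax_swap_general {X O : Type*} [Fintype X] [Nonempty X] [MeasurableSpace O]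
    (r : O → ℝ) (hr_bdd : ∃ C : ℝ, ∀ o, |r o| ≤ C)
    (𝔐 : Set (X → Measure O)) (h_ne : 𝔐.Nonempty)
    (h_prob : ∀ M ∈ 𝔐, ∀ x, IsProbabilityMeasure (M x))
    (Mbar : X → Measure O) (hMbar : ∀ x, IsProbabilityMeasure (Mbar x))
    (piOf : (X → Measure O) → X)
    (γ : ℝ) :
    (⨅ p : {p : X → ℝ // (∀ x, 0 ≤ p x) ∧ (∑ x, p x) = 1},
        ⨆ M : 𝔐, ∑ x, p.1 x *
          (meanReward r M.1 (piOf M.1) - meanReward r M.1 x -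
            γ * sqHellinger (M.1 x) (Mbar x))) =
      ⨆ μ : FinDist 𝔐, ⨅ p : {p : X → ℝ // (∀ x, 0 ≤ p x) ∧ (∑ x, p x) = 1},
        ∑ x, p.1 x * ∑ M ∈ μ.support, μ.w M *
          (meanReward r M.1 (piOf M.1) - meanReward r M.1 x -
            γ * sqHellinger (M.1 x) (Mbar x)) := by
  obtain ⟨C, hC⟩ := hr_bdd
  have : Nonempty 𝔐 := h_ne.to_subtype
  refine iInf_iSup_dotProduct_eq_iSup_iInf_dotProduct_mean (fun (M : 𝔐) x =>
    meanReward r M.1 (piOf M.1) - meanReward r M.1 x - γ * sqHellinger (M.1 x) (Mbar x))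
    ⟨C + C + |γ| * 2, fun M x => ?_⟩
  have := h_prob M.1 M.2 x
  have := h_prob M.1 M.2 (piOf M.1)
  have := hMbar x
  have h_hellinger : |γ * sqHellinger (M.1 x) (Mbar x)| ≤ |γ| * 2 := by
    rw [abs_mul, abs_of_nonneg (sqHellinger_nonneg _ _)]
    gcongr
    simpa [one_add_one_eq_two] using sqHellinger_le_add (M.1 x) (Mbar x)
  calc _ ≤ |meanReward r M.1 (piOf M.1) - meanReward r M.1 x| +
        |γ * sqHellinger (M.1 x) (Mbar x)| := abs_sub _ _
    _ ≤ C + C + |γ| * 2 := add_le_add ((abs_sub _ _).trans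
        (add_le_add (abs_meanReward_le hC M.1 _) (abs_meanReward_le hC M.1 x))) h_hellinger

/-- minimax swap for the Decision-Estimation Coefficient over a
finite decision space: the (primal) DEC equals its dual Bayesian version, where
`p` ranges over probability distributions on the finite decision space and `μ`
ranges over finitely supported priors on the model class. -/
theorem dec_minimax_swap {X O : Type*} [Fintype X] [Nonempty X] [MeasurableSpace O]
    (r : O → ℝ) (hr_meas : Measurable r) (hr_bdd : ∃ C : ℝ, ∀ o, |r o| ≤ C)
    (𝔐 : Set (X → Measure O)) (h_ne : 𝔐.Nonempty)
    (h_prob : ∀ M ∈ 𝔐, ∀ x, IsProbabilityMeasure (M x))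
    (Mbar : X → Measure O) (hMbar : ∀ x, IsProbabilityMeasure (Mbar x))
    (piOf : (X → Measure O) → X)
    (h_max : ∀ M ∈ 𝔐, ∀ x, meanReward r M x ≤ meanReward r M (piOf M))
    (γ : ℝ) (hγ : 0 < γ) :
    (⨅ p : {p : X → ℝ // (∀ x, 0 ≤ p x) ∧ (∑ x, p x) = 1},
        ⨆ M : 𝔐, ∑ x, p.1 x *
          (meanReward r M.1 (piOf M.1) - meanReward r M.1 x -
            γ * sqHellinger (M.1 x) (Mbar x))) =
      ⨆ μ : FinDist 𝔐, ⨅ p : {p : X → ℝ // (∀ x, 0 ≤ p x) ∧ (∑ x, p x) = 1},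
        ∑ x, p.1 x * ∑ M ∈ μ.support, μ.w M *
          (meanReward r M.1 (piOf M.1) - meanReward r M.1 x -
            γ * sqHellinger (M.1 x) (Mbar x)) :=
  dec_minimax_swap_general r hr_bdd 𝔐 h_ne h_prob Mbar hMbar piOf γ
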